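/- Let n ≥ 2, let S₁,…,Sₙ be a Cuntz family of order n on a complex Hilbert space H, let z be a unit vector in V_{n,m}, and let Ω ∈ H be a unit vector with s(z)Ω = Ω. If the linear span of {S_J S_K* Ω : J, K words over {1,…,n}} is dense in H, then already the linear span of {S_J Ω : J a word over {1,…,n}} is dense in H. -/

import Mathlib

noncomputable section

/-- `Vnm n m` is the Hilbert space `ℓ²({1,…,n}^m)`, identified with `(ℂ^n)^{⊗m}`. -/
abbrev Vnm (n m : ℕ) : Type := EuclideanSpace ℂ (Fin m → Fin n)

/-- The tensor product `x ⊗ y`, via `(x ⊗ y)_{JK} = x_J y_K`. -/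
def tensV {n m l : ℕ} (x : Vnm n m) (y : Vnm n l) : Vnm n (m + l) :=
  WithLp.toLp 2 <| fun J => x (fun i => J (Fin.castAdd l i)) * y (fun i => J (Fin.natAdd m i))

/-- Re-indexing of a tensor along an equality of lengths. -/
def castV {n m m' : ℕ} (h : m = m') (z : Vnm n m) : Vnm n m' :=
  WithLp.toLp 2 <| fun J => z (fun i => J (Fin.cast h i))

/-- The tensor power `x^{⊗p}`. -/
def tpowV {n m : ℕ} (x : Vnm n m) (p : ℕ) : Vnm n (p * m) :=
  WithLp.toLp 2 <| fun J => ∏ i : Fin p, x (fun t => J ⟨(i : ℕ) * m + (t : ℕ), by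
    have h2 : (t : ℕ) < m := t.isLt
    have h1 : (i : ℕ) + 1 ≤ p := i.isLt
    have h3 : ((i : ℕ) + 1) * m = (i : ℕ) * m + m := by ring
    have h4 : ((i : ℕ) + 1) * m ≤ p * m := Nat.mul_le_mul_right m h1
    omega⟩)

/-- The coordinatewise complex conjugate. -/
def conjV {n m : ℕ} (z : Vnm n m) : Vnm n m := WithLp.toLp 2 <| fun J => starRingEnd ℂ (z J)

/-- A unit vector `z` is periodic if `z = x^{⊗p}` for some unit vector `x` and `p ≥ 2`;
it is nonperiodic if it is not periodic. -/
def PeriodicV {n m : ℕ} (z : Vnm n m) : Prop :=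
  ∃ (m' p : ℕ) (x : Vnm n m') (h : p * m' = m),
    ‖x‖ = 1 ∧ 2 ≤ p ∧ castV h (tpowV x p) = z

/-- The matricization of `z ∈ V_{n,b+a}` as an operator `V_{n,a} → V_{n,b}`,
`(T z) e_K = Σ_{|J|=b} z_{JK} e_J`. -/
def matT {n b a : ℕ} (z : Vnm n (b + a)) :
    EuclideanSpace ℂ (Fin a → Fin n) →L[ℂ] EuclideanSpace ℂ (Fin b → Fin n) :=
  LinearMap.toContinuousLinearMap
    (Matrix.toEuclideanLin
      (Matrix.of fun (J : Fin b → Fin n) (K : Fin a → Fin n) => z (Fin.append J K)))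

/-- The matricization `T_a(z) : V_{n,a} → V_{n,m-a}` of `z ∈ V_{n,m}`,
`T_a(z) e_K = Σ_{|J|=m−a} z_{JK} e_J`. -/
def Tmat {n m : ℕ} (a : ℕ) (h : a ≤ m) (z : Vnm n m) :
    EuclideanSpace ℂ (Fin a → Fin n) →L[ℂ] EuclideanSpace ℂ (Fin (m - a) → Fin n) :=
  matT (castV (by omega : m = (m - a) + a) z)

/-- `z` is indecomposable if it is not a tensor product of lower-degree tensors. -/
def IndecomposableV {n m : ℕ} (z : Vnm n m) : Prop :=
  1 ≤ m ∧ ¬ ∃ (a b : ℕ) (h : a + b = m) (x : Vnm n a) (y : Vnm n b),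
    1 ≤ a ∧ 1 ≤ b ∧ castV h (tensV x y) = z

/-- The iterated tensor product `x₁ ⊗ ⋯ ⊗ x_l` of homogeneous tensors of degrees `ms i`. -/
def bigTensV {n l : ℕ} (ms : Fin l → ℕ) (xs : ∀ i, Vnm n (ms i)) : Vnm n (∑ i, ms i) :=
  WithLp.toLp 2 <| fun J => ∏ i : Fin l, xs i (fun t => J ⟨(∑ j ∈ Finset.Iio i, ms j) + (t : ℕ), by
    have h1 : (∑ j ∈ Finset.Iio i, ms j) + ms i ≤ ∑ j, ms j := by
      calc (∑ j ∈ Finset.Iio i, ms j) + ms i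
          = ∑ j ∈ insert i (Finset.Iio i), ms j := by
            rw [Finset.sum_insert (by simp)]; ring
        _ ≤ ∑ j, ms j := Finset.sum_le_sum_of_subset (Finset.subset_univ _)
    have h2 : (t : ℕ) < ms i := t.isLt
    omega⟩)

/-- `z ⊠ y ∈ V_{nn',m}`: `(z ⊠ y)_L = z_J y_K` where `L = J ⊠ K` is given by the
pairing `l_t = n'·j_t + k_t` of `{0,…,n−1}×{0,…,n'−1}` with `{0,…,nn'−1}`. -/
def boxTensV {n n' m : ℕ} (z : Vnm n m) (y : Vnm n' m) : Vnm (n * n') m :=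
  WithLp.toLp 2 <| fun L =>
    z (fun t => ⟨(L t : ℕ) / n', by
        have h := (L t).isLt
        have hn' : 0 < n' := Nat.pos_of_ne_zero (by rintro rfl; simp at h)
        exact (Nat.div_lt_iff_lt_mul hn').mpr h⟩) *
    y (fun t => ⟨(L t : ℕ) % n', by
        have h := (L t).isLt
        have hn' : 0 < n' := Nat.pos_of_ne_zero (by rintro rfl; simp at h)
        exact Nat.mod_lt _ hn'⟩)

/-- `z * y := z^{⊗α} ⊠ y^{⊗β} ∈ V_{nn',d}` where `d = αm = βl` is the lcm of `m` and `l`. -/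
def starV {n n' m l : ℕ} (z : Vnm n m) (y : Vnm n' l) : Vnm (n * n') (Nat.lcm m l) :=
  boxTensV (castV (Nat.div_mul_cancel (Nat.dvd_lcm_left m l)) (tpowV z (Nat.lcm m l / m)))
    (castV (Nat.div_mul_cancel (Nat.dvd_lcm_right m l)) (tpowV y (Nat.lcm m l / l)))

/-- Conjugacy of homogeneous tensors: `z = y`, or `z = x₁ ⊗ x₂` and `y = x₂ ⊗ x₁`
for some unit vectors `x₁, x₂`. -/
def ConjVec {n m l : ℕ} (z : Vnm n m) (y : Vnm n l) : Prop :=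
  (∃ h : m = l, castV h z = y) ∨
    ∃ (a b : ℕ) (x₁ : Vnm n a) (x₂ : Vnm n b) (h₁ : a + b = m) (h₂ : b + a = l),
      ‖x₁‖ = 1 ∧ ‖x₂‖ = 1 ∧ castV h₁ (tensV x₁ x₂) = z ∧ castV h₂ (tensV x₂ x₁) = y

/-- A Cuntz family of order `n` on `H`: `Sᵢ* Sⱼ = δᵢⱼ 1` and `Σᵢ Sᵢ Sᵢ* = 1`. -/
def IsCuntzFamily {H : Type*} [NormedAddCommGroup H] [InnerProductSpace ℂ H]
    [CompleteSpace H] {n : ℕ} (S : Fin n → H →L[ℂ] H) : Prop :=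
  (∀ i j, (ContinuousLinearMap.adjoint (S i)).comp (S j) = if i = j then 1 else 0) ∧
    ∑ i, (S i).comp (ContinuousLinearMap.adjoint (S i)) = 1

/-- `S_J := S_{j₁} ∘ ⋯ ∘ S_{j_k}` for a word `J = (j₁,…,j_k)`, with `S_∅ = 1`. -/
def Sword {H : Type*} [NormedAddCommGroup H] [InnerProductSpace ℂ H]
    {ι : Type*} (S : ι → H →L[ℂ] H) : (k : ℕ) → (Fin k → ι) → (H →L[ℂ] H)
  | 0, _ => 1
  | (k + 1), J => (S (J 0)).comp (Sword S k (fun i => J i.succ))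

/-- `s(z) := Σ_{|J|=m} z_J S_J`. -/
def sop {H : Type*} [NormedAddCommGroup H] [InnerProductSpace ℂ H]
    {n m : ℕ} (S : Fin n → H →L[ℂ] H) (z : Vnm n m) : H →L[ℂ] H :=
  ∑ J : Fin m → Fin n, z J • Sword S m J


/-!
The span `M` of the vectors `S_J Ω` is invariant under every `S_i` trivially, and under
every `S_i*` because of the fixed-point equation: it writes `Ω = Σ z_J S_J Ω` with words `J` of
length `m ≥ 1`, and `S_i*` just strips the first letter of such a word (or kills it). So `M`
contains all `S_J S_K* Ω`, and is dense.
-/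

open ContinuousLinearMap

section Words

variable {H : Type*} [NormedAddCommGroup H] [InnerProductSpace ℂ H] {ι : Type*}
  (S : ι → H →L[ℂ] H)

def wordSpan (x : H) : Submodule ℂ H :=
  Submodule.span ℂ {v : H | ∃ (k : ℕ) (J : Fin k → ι), v = Sword S k J x}

theorem Sword_succ (k : ℕ) (J : Fin (k + 1) → ι) :
    Sword S (k + 1) J = (S (J 0)).comp (Sword S k (Fin.tail J)) := rfl

theorem Sword_apply_mem {M : Submodule ℂ H} (hM : ∀ i, ∀ x ∈ M, S i x ∈ M) :
    ∀ (k : ℕ) (J : Fin k → ι), ∀ x ∈ M, Sword S k J x ∈ M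
  | 0, _, _, hx => hx
  | k + 1, J, x, hx => hM _ _ (Sword_apply_mem hM k (Fin.tail J) x hx)

theorem Sword_mem_wordSpan (x : H) (k : ℕ) (J : Fin k → ι) : Sword S k J x ∈ wordSpan S x :=
  Submodule.subset_span ⟨k, J, rfl⟩

theorem self_mem_wordSpan (x : H) : x ∈ wordSpan S x :=
  Sword_mem_wordSpan S x 0 Fin.elim0

theorem apply_mem_wordSpan (x : H) (i : ι) : ∀ y ∈ wordSpan S x, S i y ∈ wordSpan S x := by
  show wordSpan S x ≤ (wordSpan S x).comap (S i : H →ₗ[ℂ] H)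
  refine Submodule.span_le.2 ?_
  rintro _ ⟨k, J, rfl⟩
  simpa [Sword] using Sword_mem_wordSpan S x (k + 1) (Fin.cons i J)

variable [CompleteSpace H]

theorem adjoint_Sword_apply_mem {M : Submodule ℂ H}
    (hM : ∀ i, ∀ x ∈ M, adjoint (S i) x ∈ M) :
    ∀ (k : ℕ) (K : Fin k → ι), ∀ x ∈ M, adjoint (Sword S k K) x ∈ M
  | 0, _, x, hx => by rwa [Sword, adjoint_one]
  | k + 1, K, x, hx => by
    rw [Sword_succ, adjoint_comp]
    exact adjoint_Sword_apply_mem hM k (Fin.tail K) _ (hM _ x hx)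

variable [DecidableEq ι] {S}

theorem adjoint_apply_Sword_succ
    (hS : ∀ i j, (adjoint (S i)).comp (S j) = if i = j then 1 else 0)
    (i : ι) (k : ℕ) (J : Fin (k + 1) → ι) (x : H) :
    adjoint (S i) (Sword S (k + 1) J x) = if i = J 0 then Sword S k (Fin.tail J) x else 0 := by
  rw [Sword_succ, comp_apply, ← comp_apply (adjoint (S i)), hS]
  split_ifs <;> simp

theorem adjoint_apply_mem_wordSpan
    (hS : ∀ i j, (adjoint (S i)).comp (S j) = if i = j then 1 else 0) {x : H}
    (hx : x ∈ Submodule.span ℂ {v : H | ∃ (k : ℕ) (J : Fin (k + 1) → ι), v = Sword S (k + 1) J x})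
    (i : ι) : ∀ y ∈ wordSpan S x, adjoint (S i) y ∈ wordSpan S x := by
  set N := (wordSpan S x).comap (adjoint (S i) : H →ₗ[ℂ] H)
  have hsucc : ∀ (k : ℕ) (J : Fin (k + 1) → ι), Sword S (k + 1) J x ∈ N := by
    intro k J
    show adjoint (S i) (Sword S (k + 1) J x) ∈ wordSpan S x
    rw [adjoint_apply_Sword_succ hS]
    split_ifs
    · exact Sword_mem_wordSpan S x k _
    · exact Submodule.zero_mem _
  show wordSpan S x ≤ N
  refine Submodule.span_le.2 ?_
  rintro _ ⟨_ | k, J, rfl⟩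
  · exact Submodule.span_le.2 (by rintro _ ⟨k, J, rfl⟩; exact hsucc k J) hx
  · exact hsucc k J

end Words

theorem sop_apply_mem_span {H : Type*} [NormedAddCommGroup H] [InnerProductSpace ℂ H]
    {n m : ℕ} (S : Fin n → H →L[ℂ] H) (z : Vnm n m) (x : H) :
    sop S z x ∈ Submodule.span ℂ {v : H | ∃ J : Fin m → Fin n, v = Sword S m J x} := by
  rw [sop, sum_apply]
  exact Submodule.sum_mem _ fun J _ => Submodule.smul_mem _ _ (Submodule.subset_span ⟨J, rfl⟩)

theorem subCuntz_stmt12_general {H : Type*} [NormedAddCommGroup H] [InnerProductSpace ℂ H]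
    [CompleteSpace H] {n m : ℕ} (hm : 1 ≤ m)
    (S : Fin n → H →L[ℂ] H) (hS : IsCuntzFamily S)
    (z : Vnm n m) (Ω : H)
    (hfix : sop S z Ω = Ω)
    (hdense : Dense ((Submodule.span ℂ
      {v : H | ∃ (k k' : ℕ) (J : Fin k → Fin n) (K : Fin k' → Fin n),
        v = Sword S k J (ContinuousLinearMap.adjoint (Sword S k' K) Ω)} : Submodule ℂ H)
        : Set H)) :
    Dense ((Submodule.span ℂ
      {v : H | ∃ (k : ℕ) (J : Fin k → Fin n), v = Sword S k J Ω} : Submodule ℂ H)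
        : Set H) := by
  obtain ⟨m', rfl⟩ : ∃ m', m = m' + 1 := ⟨m - 1, by omega⟩
  have hΩ : Ω ∈ Submodule.span ℂ
      {v : H | ∃ (k : ℕ) (J : Fin (k + 1) → Fin n), v = Sword S (k + 1) J Ω} := by
    refine Submodule.span_mono ?_ (hfix ▸ sop_apply_mem_span S z Ω)
    rintro _ ⟨J, rfl⟩
    exact ⟨m', J, rfl⟩
  refine hdense.mono (Submodule.span_le.2 ?_)
  rintro _ ⟨k, k', J, K, rfl⟩
  refine Sword_apply_mem S (apply_mem_wordSpan S Ω) k J _ ?_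
  exact adjoint_Sword_apply_mem S (adjoint_apply_mem_wordSpan hS.1 hΩ) k' K Ω
    (self_mem_wordSpan S Ω)

/-- if `s(z)Ω = Ω` and the span of `{S_J S_K* Ω}` is dense, then already
the span of `{S_J Ω}` is dense. -/
theorem subCuntz_stmt12 {H : Type*} [NormedAddCommGroup H] [InnerProductSpace ℂ H]
    [CompleteSpace H] {n m : ℕ} (hn : 2 ≤ n) (hm : 1 ≤ m)
    (S : Fin n → H →L[ℂ] H) (hS : IsCuntzFamily S)
    (z : Vnm n m) (hz : ‖z‖ = 1) (Ω : H) (hΩ : ‖Ω‖ = 1)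
    (hfix : sop S z Ω = Ω)
    (hdense : Dense ((Submodule.span ℂ
      {v : H | ∃ (k k' : ℕ) (J : Fin k → Fin n) (K : Fin k' → Fin n),
        v = Sword S k J (ContinuousLinearMap.adjoint (Sword S k' K) Ω)} : Submodule ℂ H)
        : Set H)) :
    Dense ((Submodule.span ℂ
      {v : H | ∃ (k : ℕ) (J : Fin k → Fin n), v = Sword S k J Ω} : Submodule ℂ H)
        : Set H) :=
  subCuntz_stmt12_general hm S hS z Ω hfix hdense
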